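/- arXiv:1510.00927 — 10 statements merged into one kernel-verified Lean document; each statement's English description precedes it below -/
import Mathlib

section
/- If b, c are elements of a J-class J with representative ideal element τ and bc ∈ J, then τ ≤ τ² and hence τ = τ². -/
/-- An `le`-semigroup: a semigroup with a lattice order compatible with
multiplication on both sides, possessing a greatest element `e`. -/
class LeSemigroup (S : Type*) extends Semigroup S, Lattice S where
  e : S
  le_e : ∀ x : S, x ≤ e
  mul_le_mul_left' : ∀ a b x : S, a ≤ b → x * a ≤ x * b
  mul_le_mul_right' : ∀ a b x : S, a ≤ b → a * x ≤ b * x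

namespace LeSemigroup

variable {S : Type*} [LeSemigroup S]

/-- `t x = exe ∨ xe ∨ ex ∨ x`, the ideal element generated by `x`. -/
def t (x : S) : S := e * x * e ⊔ x * e ⊔ e * x ⊔ x

/-- `x` is an ideal element. -/
def IsIdeal (x : S) : Prop := x * e ≤ x ∧ e * x ≤ x

/-- `x` is a left ideal element. -/
def IsLeftIdeal (x : S) : Prop := e * x ≤ x

end LeSemigroup

open LeSemigroup
theorem stmt6 {S : Type*} [LeSemigroup S] (τ b c : S) (hτ : IsIdeal τ)
    (hb : t b = τ) (hc : t c = τ) (hbc : t (b * c) = τ) :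
    τ ≤ τ * τ ∧ τ = τ * τ := by
  obtain ⟨hre, hle⟩ := hτ
  have hb' : b ≤ τ := hb ▸ le_sup_right
  have hc' : c ≤ τ := hc ▸ le_sup_right
  have hbcτ : b * c ≤ τ * τ :=
    le_trans (LeSemigroup.mul_le_mul_right' b τ c hb')
      (LeSemigroup.mul_le_mul_left' c τ τ hc')
  have h1 : LeSemigroup.e * (b * c) ≤ τ * τ := by
    calc LeSemigroup.e * (b * c) ≤ LeSemigroup.e * (τ * τ) :=
          LeSemigroup.mul_le_mul_left' _ _ _ hbcτ
      _ = (LeSemigroup.e * τ) * τ := (mul_assoc _ _ _).symm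
      _ ≤ τ * τ := LeSemigroup.mul_le_mul_right' _ _ _ hle
  have h2 : (b * c) * LeSemigroup.e ≤ τ * τ := by
    calc (b * c) * LeSemigroup.e ≤ (τ * τ) * LeSemigroup.e :=
          LeSemigroup.mul_le_mul_right' _ _ _ hbcτ
      _ = τ * (τ * LeSemigroup.e) := mul_assoc _ _ _
      _ ≤ τ * τ := LeSemigroup.mul_le_mul_left' _ _ _ hre
  have h3 : LeSemigroup.e * (b * c) * LeSemigroup.e ≤ τ * τ := by
    calc LeSemigroup.e * (b * c) * LeSemigroup.e
        ≤ (τ * τ) * LeSemigroup.e := LeSemigroup.mul_le_mul_right' _ _ _ h1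
      _ = τ * (τ * LeSemigroup.e) := mul_assoc _ _ _
      _ ≤ τ * τ := LeSemigroup.mul_le_mul_left' _ _ _ hre
  have hle2 : τ ≤ τ * τ := by
    have : t (b * c) ≤ τ * τ := sup_le (sup_le (sup_le h3 h2) h1) hbcτ
    rwa [hbc] at this
  have hge : τ * τ ≤ τ :=
    le_trans (LeSemigroup.mul_le_mul_left' _ _ _ (LeSemigroup.le_e τ)) hre
  exact ⟨hle2, le_antisymm hle2 hge⟩
end

section
/- If a J-class J with representative ideal element τ is closed under multiplication (a subsemigroup), then for every x ∈ J: τxτ = τ = exe and τxe = τ = exτ; in particular τe = τ = eτ. -/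
open LeSemigroup
theorem stmt7 {S : Type*} [LeSemigroup S] (τ : S) (hτ : IsIdeal τ) (hτJ : t τ = τ)
    (hsub : ∀ a b : S, t a = τ → t b = τ → t (a * b) = τ)
    (x : S) (hx : t x = τ) :
    (τ * x * τ = τ ∧ τ = e * x * e) ∧ (τ * x * e = τ ∧ τ = e * x * τ) ∧
      (τ * e = τ ∧ e * τ = τ) := by
  have mm : ∀ {a b c d : S}, a ≤ b → c ≤ d → a * c ≤ b * d := fun h1 h2 =>
    le_trans (LeSemigroup.mul_le_mul_right' _ _ _ h1) (LeSemigroup.mul_le_mul_left' _ _ _ h2)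
  have hxτ : x ≤ τ := hx ▸ le_sup_right
  have hex : e * x ≤ τ := hx ▸ le_sup_of_le_left le_sup_right
  have hxe : x * e ≤ τ := hx ▸ le_sup_of_le_left (le_sup_of_le_left le_sup_right)
  have hexe : e * x * e ≤ τ := hx ▸ le_sup_of_le_left (le_sup_of_le_left le_sup_left)
  have hτe : τ ≤ e := le_e τ
  -- upper bound
  have hup : τ * x * τ ≤ τ :=
    le_trans (mm (le_trans (mm le_rfl (le_e x)) hτ.1) hτe) hτ.1
  -- lower bound via x³ ∈ J
  have h3 : t (x * x * x) = τ := hsub _ _ (hsub _ _ hx hx) hx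
  have c1 : e * (x * x * x) * e ≤ τ * x * τ := by
    have h : ((e * x) * x) * (x * e) ≤ (τ * x) * τ := mm (mm hex le_rfl) hxe
    calc e * (x * x * x) * e = ((e * x) * x) * (x * e) := by simp [mul_assoc]
      _ ≤ τ * x * τ := h
  have c2 : (x * x * x) * e ≤ τ * x * τ := by
    have h : (x * x) * (x * e) ≤ (τ * x) * τ := mm (mm hxτ le_rfl) hxe
    calc (x * x * x) * e = (x * x) * (x * e) := by simp [mul_assoc]
      _ ≤ τ * x * τ := h
  have c3 : e * (x * x * x) ≤ τ * x * τ := by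
    have h : ((e * x) * x) * x ≤ (τ * x) * τ := mm (mm hex le_rfl) hxτ
    calc e * (x * x * x) = ((e * x) * x) * x := by simp [mul_assoc]
      _ ≤ τ * x * τ := h
  have c4 : x * x * x ≤ τ * x * τ := mm (mm hxτ le_rfl) hxτ
  have hlow : τ ≤ τ * x * τ := by
    conv_lhs => rw [← h3]
    exact sup_le (sup_le (sup_le c1 c2) c3) c4
  have hmain : τ * x * τ = τ := le_antisymm hup hlow
  have hexeτ : τ = e * x * e :=
    le_antisymm (hmain ▸ mm (mm hτe le_rfl) hτe) hexe
  have hxτ2 : x * τ ≤ τ := le_trans (mm (le_e x) le_rfl) hτ.2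
  have hτxe : τ * x * e = τ := by
    refine le_antisymm ?_ (le_trans hlow (mm le_rfl hτe))
    exact le_trans (mm (le_trans (mm le_rfl (le_e x)) hτ.1) le_rfl) hτ.1
  have hexτ : τ = e * x * τ := by
    refine le_antisymm (le_trans hlow (mm (mm hτe le_rfl) le_rfl)) ?_
    rw [mul_assoc]
    exact le_trans (LeSemigroup.mul_le_mul_left' _ _ _ hxτ2) hτ.2
  have hτe' : τ * e = τ := by
    refine le_antisymm hτ.1 ?_
    calc τ = τ * x * e := hτxe.symm
      _ ≤ τ * e := by
          have : (x : S) * e ≤ e := le_e _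
          calc τ * x * e = τ * (x * e) := by rw [mul_assoc]
            _ ≤ τ * e := LeSemigroup.mul_le_mul_left' _ _ _ this
  have heτ : e * τ = τ := by
    refine le_antisymm hτ.2 ?_
    calc τ = e * x * τ := hexτ
      _ = e * (x * τ) := by rw [mul_assoc]
      _ ≤ e * τ := LeSemigroup.mul_le_mul_left' _ _ _ hxτ2
  exact ⟨⟨hmain, hexeτ⟩, ⟨hτxe, hexτ⟩, hτe', heτ⟩
end

section
/- If S is both regular and intra-regular, then for every x ∈ S, the ideal element τ = t(x) generated by x satisfies τxτ = τ = exe and τxe = τ = exτ. -/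
open LeSemigroup

instance {S : Type*} [LeSemigroup S] : CovariantClass S S (· * ·) (· ≤ ·) :=
  ⟨fun x a b h => LeSemigroup.mul_le_mul_left' a b x h⟩

instance {S : Type*} [LeSemigroup S] :
    CovariantClass S S (Function.swap (· * ·)) (· ≤ ·) :=
  ⟨fun x a b h => LeSemigroup.mul_le_mul_right' a b x h⟩

theorem stmt8 {S : Type*} [LeSemigroup S]
    (hreg : ∀ x : S, x ≤ x * e * x) (hintra : ∀ x : S, x ≤ e * (x * x) * e)
    (x : S) :
    (t x * x * t x = t x ∧ t x = e * x * e) ∧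
      (t x * x * e = t x ∧ t x = e * x * t x) := by
  have hee : (e : S) * e ≤ e := LeSemigroup.le_e _
  -- x ≤ e x e
  have hx : x ≤ e * x * e := by
    calc x ≤ e * (x * x) * e := hintra x
      _ ≤ e * (x * e) * e := mul_le_mul' (mul_le_mul' le_rfl
            (mul_le_mul' le_rfl (LeSemigroup.le_e x))) le_rfl
      _ = e * x * (e * e) := by simp [mul_assoc]
      _ ≤ e * x * e := mul_le_mul' le_rfl hee
  have hxe : x * e ≤ e * x * e := by
    calc x * e ≤ e * x * e * e := mul_le_mul' hx le_rfl
      _ = e * x * (e * e) := by simp [mul_assoc]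
      _ ≤ e * x * e := mul_le_mul' le_rfl hee
  have hex : e * x ≤ e * x * e := by
    calc e * x ≤ e * (e * x * e) := mul_le_mul' le_rfl hx
      _ = e * e * (x * e) := by simp [mul_assoc]
      _ ≤ e * (x * e) := mul_le_mul' hee le_rfl
      _ = e * x * e := by simp [mul_assoc]
  have ht : t x = e * x * e := by
    refine le_antisymm ?_ ?_
    · exact sup_le (sup_le (sup_le le_rfl hxe) hex) hx
    · exact le_sup_of_le_left (le_sup_of_le_left le_sup_left)
  -- exe ≤ exexe
  have step : e * x * e ≤ e * x * e * x * e := by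
    calc e * x * e ≤ e * (x * e * x) * e := mul_le_mul' (mul_le_mul' le_rfl (hreg x)) le_rfl
      _ = e * x * e * x * e := by simp [mul_assoc]
  have step2 : e * x * e ≤ e * x * e * x * e * x * e := by
    refine step.trans ?_
    calc e * x * e * x * e ≤ e * (x * e * x) * e * x * e :=
          mul_le_mul' (mul_le_mul' (mul_le_mul' (mul_le_mul' le_rfl (hreg x)) le_rfl) le_rfl) le_rfl
      _ = e * x * e * x * e * x * e := by simp [mul_assoc]
  have hle : ∀ y : S, y ≤ e := LeSemigroup.le_e
  refine ⟨⟨?_, ht⟩, ?_, ?_⟩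
  · rw [ht]
    refine le_antisymm ?_ ?_
    · calc e * x * e * x * (e * x * e) ≤ e * x * e * x * e := mul_le_mul' le_rfl (hle _)
        _ = e * x * (e * x * e) := by simp [mul_assoc]
        _ ≤ e * x * e := mul_le_mul' le_rfl (hle _)
    · calc e * x * e ≤ e * x * e * x * e * x * e := step2
        _ = e * x * e * x * (e * x * e) := by simp [mul_assoc]
  · rw [ht]
    refine le_antisymm ?_ ?_
    · calc e * x * e * x * e = e * x * (e * x * e) := by simp [mul_assoc]
        _ ≤ e * x * e := mul_le_mul' le_rfl (hle _)
    · exact step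
  · rw [ht]
    refine le_antisymm ?_ ?_
    · calc e * x * e ≤ e * x * e * x * e := step
        _ = e * x * (e * x * e) := by simp [mul_assoc]
    · exact mul_le_mul' le_rfl (hle _)
end

section
/- A J-class J of S is a subgroup of S (closed under multiplication and a group under it) if and only if J consists of a single idempotent element. -/
namespace LeSemigroup

variable {S : Type*} [LeSemigroup S]

lemma aux_le_t (x : S) : x ≤ t x := le_sup_right

lemma aux_mull {a b : S} (x : S) (h : a ≤ b) : x * a ≤ x * b :=
  mul_le_mul_left' a b x h

lemma aux_mulr {a b : S} (x : S) (h : a ≤ b) : a * x ≤ b * x :=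
  mul_le_mul_right' a b x h

/-- For an idempotent `i`, `t i = e * i * e`. -/
lemma aux_t_idem {i : S} (hii : i * i = i) : t i = e * i * e := by
  have h1 : i ≤ e * i := by
    calc i = i * i := hii.symm
    _ ≤ e * i := aux_mulr i (le_e i)
  have h2 : i ≤ i * e := by
    calc i = i * i := hii.symm
    _ ≤ i * e := aux_mull i (le_e i)
  have h3 : i * e ≤ e * i * e := aux_mulr e h1
  have h4 : e * i ≤ e * i * e := by
    have := aux_mull e h2
    rwa [← mul_assoc] at this
  have h5 : i ≤ e * i * e := h1.trans h4
  have : t i = e * i * e ⊔ i * e ⊔ e * i ⊔ i := rfl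
  rw [this, sup_eq_left.mpr h3, sup_eq_left.mpr h4, sup_eq_left.mpr h5]

end LeSemigroup

open LeSemigroup

theorem stmt9 {S : Type*} [LeSemigroup S] (a : S) :
    ((∀ x y : S, t x = t a → t y = t a → t (x * y) = t a) ∧
      ∃ i : S, t i = t a ∧ (∀ x : S, t x = t a → i * x = x ∧ x * i = x) ∧
        ∀ x : S, t x = t a → ∃ y : S, t y = t a ∧ x * y = i ∧ y * x = i) ↔
      (∃ i : S, i * i = i ∧ ∀ x : S, t x = t a ↔ x = i) := by
  constructor
  · rintro ⟨_hc, i, hti, hid, hinv⟩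
    have hii : i * i = i := (hid i hti).1
    -- T := e * i * e = t i = t a
    set T : S := e * i * e with hT
    have htiT : t i = T := aux_t_idem hii
    have hTa : T = t a := htiT ▸ hti
    -- T is an ideal element
    have hee : (e : S) * e ≤ e := le_e _
    have heT : e * T ≤ T := by
      have : e * T = e * e * i * e := by rw [hT, ← mul_assoc, ← mul_assoc]
      rw [this]
      exact aux_mulr e (aux_mulr i hee)
    have hTe : T * e ≤ T := by
      have : T * e = e * i * (e * e) := by rw [hT, mul_assoc]
      rw [this]
      exact aux_mull (e * i) hee
    -- t T = T, hence T is in the J-class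
    have htT : t T = T := by
      have h1 : e * T * e ≤ T := (aux_mulr e heT).trans hTe
      have : t T = e * T * e ⊔ T * e ⊔ e * T ⊔ T := rfl
      rw [this]
      exact le_antisymm (sup_le (sup_le (sup_le h1 hTe) heT) le_rfl) le_sup_right
    have hTJ : t T = t a := by rw [htT, hTa]
    -- every element of the class is ≤ T
    have hle : ∀ x : S, t x = t a → x ≤ T := fun x hx =>
      (aux_le_t x).trans (le_of_eq (hx.trans hTa.symm))
    -- T * T = T
    have hiT : i ≤ T := hle i hti
    have hTi : T * i = T := (hid T hTJ).2
    have hTT : T * T = T := by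
      refine le_antisymm ((aux_mull T (le_e T)).trans hTe) ?_
      calc T = T * i := hTi.symm
      _ ≤ T * T := aux_mull T hiT
    -- T = i via the inverse of T
    have hTeqi : T = i := by
      obtain ⟨z, _hz, hTz, _⟩ := hinv T hTJ
      calc T = T * i := hTi.symm
      _ = T * (T * z) := by rw [hTz]
      _ = T * T * z := (mul_assoc T T z).symm
      _ = T * z := by rw [hTT]
      _ = i := hTz
    refine ⟨i, hii, fun x => ⟨fun hx => ?_, fun hx => hx ▸ hti⟩⟩
    obtain ⟨y, hy, hxy, _⟩ := hinv x hx
    have hyi : y ≤ i := hTeqi ▸ hle y hy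
    have hxi : x ≤ i := hTeqi ▸ hle x hx
    have : i ≤ x := by
      calc i = x * y := hxy.symm
      _ ≤ x * i := aux_mull x hyi
      _ = x := (hid x hx).2
    exact le_antisymm hxi this
  · rintro ⟨i, hii, hiff⟩
    have hti : t i = t a := (hiff i).mpr rfl
    refine ⟨fun x y hx hy => ?_, i, hti, fun x hx => ?_, fun x hx => ⟨i, hti, ?_, ?_⟩⟩
    · rw [(hiff x).mp hx, (hiff y).mp hy, hii]; exact hti
    · rw [(hiff x).mp hx, hii]; exact ⟨rfl, rfl⟩
    · rw [(hiff x).mp hx, hii]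
    · rw [(hiff x).mp hx, hii]
end

section
/- If J is a J-class that is a subgroup of S with unit element i, then i is an ideal element of S, hence i equals the representative ideal element τ of J. -/
open LeSemigroup

lemma t_of_ideal {S : Type*} [LeSemigroup S] {x : S} (h : IsIdeal x) : t x = x := by
  obtain ⟨h1, h2⟩ := h
  apply le_antisymm
  · refine sup_le (sup_le (sup_le ?_ h1) h2) le_rfl
    calc LeSemigroup.e * x * LeSemigroup.e ≤ x * LeSemigroup.e :=
          LeSemigroup.mul_le_mul_right' _ _ _ h2
      _ ≤ x := h1
  · exact le_sup_right

theorem stmt10 {S : Type*} [LeSemigroup S] (a τ i : S)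
    (hτ : IsIdeal τ) (hτJ : t τ = t a)
    (hsub : ∀ x y : S, t x = t a → t y = t a → t (x * y) = t a)
    (hi : t i = t a) (hunit : ∀ x : S, t x = t a → i * x = x ∧ x * i = x)
    (hinv : ∀ x : S, t x = t a → ∃ y : S, t y = t a ∧ x * y = i ∧ y * x = i) :
    IsIdeal i ∧ i = τ := by
  obtain ⟨y, hy, hτy, hyτ⟩ := hinv τ hτJ
  have hidl : IsIdeal i := by
    constructor
    · -- i * e = y * τ * e ≤ y * τ = i
      calc i * LeSemigroup.e = y * τ * LeSemigroup.e := by rw [hyτ]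
        _ = y * (τ * LeSemigroup.e) := mul_assoc _ _ _
        _ ≤ y * τ := LeSemigroup.mul_le_mul_left' _ _ _ hτ.1
        _ = i := hyτ
    · calc LeSemigroup.e * i = LeSemigroup.e * (τ * y) := by rw [hτy]
        _ = LeSemigroup.e * τ * y := (mul_assoc _ _ _).symm
        _ ≤ τ * y := LeSemigroup.mul_le_mul_right' _ _ _ hτ.2
        _ = i := hτy
  refine ⟨hidl, ?_⟩
  calc i = t i := (t_of_ideal hidl).symm
    _ = t a := hi
    _ = t τ := hτJ.symm
    _ = τ := t_of_ideal hτ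
end

section
/- Assume S satisfies condition Λ (any two left ideal elements of S commute). If e is an idempotent ideal element of S, then the J-class of e in the le-semigroup ]e] = {x : x ≤ e} is closed under multiplication: if exe = e = eye (for x, y ≤ e) then e(xy)e = e. -/
open LeSemigroup

theorem stmt13 {S : Type*} [LeSemigroup S]
    (hΛ : ∀ a b : S, IsLeftIdeal a → IsLeftIdeal b → a * b = b * a)
    (f : S) (hf : IsIdeal f) (hff : f * f = f)
    (x y : S) (hx : x ≤ f) (hy : y ≤ f)
    (hxJ : f * x * f = f) (hyJ : f * y * f = f) :
    f * (x * y) * f = f := by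
  have hxl : IsLeftIdeal (f * x) := by
    show LeSemigroup.e * (f * x) ≤ f * x
    rw [← mul_assoc]
    exact LeSemigroup.mul_le_mul_right' _ _ _ hf.2
  have hfl : IsLeftIdeal f := hf.2
  have hcomm : (f * x) * f = f * (f * x) := hΛ (f * x) f hxl hfl
  have hfx : f * x = f := by
    have : f * (f * x) = f * x := by rw [← mul_assoc, hff]
    rw [this] at hcomm
    rw [← hcomm]
    exact hxJ
  calc f * (x * y) * f = ((f * x) * y) * f := by rw [mul_assoc f x y]
    _ = (f * y) * f := by rw [hfx]
    _ = f := hyJ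
end

section
/- If S is semisimple and satisfies condition Λ, then for every idempotent ideal element α, the J-class J_α is left simple: the only left ideal element of the ve-semigroup J_α (with greatest element α) is α itself. Concretely, if b ∈ J_α satisfies αb ≤ b, then b = α. -/
open LeSemigroup

theorem stmt16 {S : Type*} [LeSemigroup S]
    (hss : ∀ x : S, x ≤ e * x * e * x * e)
    (hΛ : ∀ a b : S, IsLeftIdeal a → IsLeftIdeal b → a * b = b * a)
    (α : S) (hα : IsIdeal α) (hαα : α * α = α)
    (b : S) (hb : t b = α) (hbl : α * b ≤ b) :
    b = α := by
  have hmulR : ∀ (a c x : S), a ≤ c → a * x ≤ c * x := LeSemigroup.mul_le_mul_right'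
  have hmulL : ∀ (a c x : S), a ≤ c → x * a ≤ x * c := LeSemigroup.mul_le_mul_left'
  have hmul : ∀ {a c u v : S}, a ≤ c → u ≤ v → a * u ≤ c * v := fun h1 h2 =>
    le_trans (hmulR _ _ _ h1) (hmulL _ _ _ h2)
  have hee : (e : S) * e ≤ e := le_e _
  have hbα : b ≤ α := by rw [← hb]; exact le_sup_right
  have hebeα : e * b * e ≤ α := by
    rw [← hb]; exact le_sup_of_le_left (le_sup_of_le_left le_sup_left)
  -- e*b is a left ideal
  have hli : IsLeftIdeal (e * b) := by
    show e * (e * b) ≤ e * b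
    rw [← mul_assoc]; exact hmulR _ _ _ hee
  have hαli : IsLeftIdeal α := hα.2
  have hcomm : α * (e * b) = (e * b) * α := hΛ _ _ hαli hli
  have hαeb : α * (e * b) ≤ b := by
    rw [← mul_assoc]
    exact le_trans (hmulR _ _ _ hα.1) hbl
  -- key1 : e*b ≤ b
  have key1 : e * b ≤ b := by
    calc e * b ≤ e * (e * b) * e * (e * b) * e := hss (e * b)
      _ ≤ (e * b) * e * (e * b) * e := by
          refine hmulR _ _ _ (hmulR _ _ _ (hmulR _ _ _ ?_))
          rw [← mul_assoc]; exact hmulR _ _ _ hee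
      _ = (e * b) * (e * (e * b) * e) := by simp only [mul_assoc]
      _ ≤ (e * b) * α := by
          refine hmulL _ _ _ ?_
          calc e * (e * b) * e ≤ (e * b) * e := hmulR _ _ _ hli
            _ = e * b * e := by rw [mul_assoc]
            _ ≤ α := hebeα
      _ = α * (e * b) := hcomm.symm
      _ ≤ b := hαeb
  -- b is a left ideal, so b*α = α*b ≤ b
  have hbα' : b * α ≤ b := by
    rw [← hΛ _ _ hαli key1]; exact hbl
  -- key2 : b*e ≤ b
  have key2 : b * e ≤ b := by
    calc b * e ≤ e * (b * e) * e * (b * e) * e := hss (b * e)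
      _ = (e * b) * ((e * e) * b * (e * e)) := by simp only [mul_assoc]
      _ ≤ b * (e * b * e) := hmul key1 (hmul (hmulR _ _ _ hee) hee)
      _ ≤ b * α := hmulL _ _ _ hebeα
      _ ≤ b := hbα'
  -- key3 : e*b*e ≤ b
  have key3 : e * b * e ≤ b := le_trans (hmulR _ _ _ key1) key2
  have hαb : α ≤ b := by
    rw [← hb]
    exact sup_le (sup_le (sup_le key3 key2) key1) le_rfl
  exact le_antisymm hbα hαb
end

section
/- If S is semisimple and satisfies condition Λ, then the J-classes multiply along the semilattice of ideal elements: for ideal elements α, β of S, J_α · J_β ⊆ J_{αβ}; concretely, if εxε = α and εyε = β then ε(xy)ε = αβ. -/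
open LeSemigroup

/-! Semisimplicity forces `e * e = e` and `e x e x e = e x e`. With `α = e x e` and `β = e y e`,
the bound `y ≤ e y e y e` gives `e (x y) e ≤ α β`. Conversely `α β = (e x) (α β) (y e)`, and
condition Λ applied to the left ideal elements `e x` and `e y e` rewrites the middle factor
`α β = (e x)(e y e)` as `(e y)(e x)`, so `α β = (e x e y e) (x y e) ≤ e (x y e)`. -/

namespace LeSemigroup

variable {S : Type*} [LeSemigroup S]

instance : MulLeftMono S := ⟨fun x _ _ h => mul_le_mul_left' _ _ x h⟩

instance : MulRightMono S := ⟨fun x _ _ h => mul_le_mul_right' _ _ x h⟩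

theorem isLeftIdeal_e_mul (x : S) : IsLeftIdeal (e * x) := by
  rw [IsLeftIdeal, ← mul_assoc]
  exact mul_le_mul_left (le_e _) x

variable (S) in
def IsSemisimple : Prop := ∀ x : S, x ≤ e * x * e * x * e

variable (S) in
def LeftIdealsCommute : Prop := ∀ a b : S, IsLeftIdeal a → IsLeftIdeal b → a * b = b * a

namespace IsSemisimple

theorem e_mul_e (hss : IsSemisimple S) : (e : S) * e = e := by
  refine le_antisymm (le_e _) ?_
  calc (e : S) ≤ e * e * e * e * e := hss e
    _ = e * (e * e * e * e) := by simp only [mul_assoc]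
    _ ≤ e * e := mul_le_mul_right (le_e _) _

theorem e_mul_e_mul (hss : IsSemisimple S) (x : S) : e * (e * x) = e * x := by
  rw [← mul_assoc, hss.e_mul_e]

theorem e_mul_mul_e_mul_mul_e (hss : IsSemisimple S) (x : S) :
    e * x * e * x * e = e * x * e := by
  refine le_antisymm ?_ ?_
  · calc e * x * e * x * e ≤ e * x * e * e * e := by gcongr; exact le_e x
      _ = e * x * e := by simp only [mul_assoc, hss.e_mul_e]
  · calc e * x * e ≤ e * (e * x * e * x * e) * e := by gcongr; exact hss x
      _ = e * x * e * x * e := by simp only [mul_assoc, hss.e_mul_e, hss.e_mul_e_mul]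

theorem e_mul_mul_mul_e_le (hss : IsSemisimple S) (x y : S) :
    e * (x * y) * e ≤ e * x * e * (e * y * e) :=
  calc e * (x * y) * e ≤ e * (x * (e * y * e * y * e)) * e := by gcongr; exact hss y
    _ = e * x * e * (e * y * e * y * e) := by
      simp only [mul_assoc, hss.e_mul_e, hss.e_mul_e_mul]
    _ = e * x * e * (e * y * e) := by rw [hss.e_mul_mul_e_mul_mul_e]

theorem e_mul_mul_e_mul_e_mul_mul_e (hss : IsSemisimple S) (hΛ : LeftIdealsCommute S)
    (x y : S) : e * x * e * (e * y * e) = e * y * (e * x) :=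
  calc e * x * e * (e * y * e) = e * x * (e * (y * e)) := by
        simp only [mul_assoc, hss.e_mul_e_mul]
    _ = e * (y * e) * (e * x) := hΛ _ _ (isLeftIdeal_e_mul x) (isLeftIdeal_e_mul _)
    _ = e * y * (e * x) := by simp only [mul_assoc, hss.e_mul_e_mul]

theorem le_e_mul_mul_mul_e (hss : IsSemisimple S) (hΛ : LeftIdealsCommute S) (x y : S) :
    e * x * e * (e * y * e) ≤ e * (x * y) * e :=
  calc e * x * e * (e * y * e) = e * x * e * x * e * (e * y * e * y * e) := by
        rw [hss.e_mul_mul_e_mul_mul_e, hss.e_mul_mul_e_mul_mul_e]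
    _ = e * x * (e * x * e * (e * y * e)) * (y * e) := by
        simp only [mul_assoc, hss.e_mul_e_mul]
    _ = e * x * e * y * e * (x * y * e) := by
        rw [hss.e_mul_mul_e_mul_e_mul_mul_e hΛ]
        simp only [mul_assoc]
    _ ≤ e * (x * y * e) := mul_le_mul_left (le_e _) _
    _ = e * (x * y) * e := by simp only [mul_assoc]

end IsSemisimple

end LeSemigroup

theorem stmt17_general {S : Type*} [LeSemigroup S]
    (hss : ∀ x : S, x ≤ e * x * e * x * e)
    (hΛ : ∀ a b : S, IsLeftIdeal a → IsLeftIdeal b → a * b = b * a)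
    (α β x y : S)
    (hx : e * x * e = α) (hy : e * y * e = β) :
    e * (x * y) * e = α * β := by
  subst hx hy
  exact le_antisymm (IsSemisimple.e_mul_mul_mul_e_le hss x y)
    (IsSemisimple.le_e_mul_mul_mul_e hss hΛ x y)

theorem stmt17 {S : Type*} [LeSemigroup S]
    (hss : ∀ x : S, x ≤ e * x * e * x * e)
    (hΛ : ∀ a b : S, IsLeftIdeal a → IsLeftIdeal b → a * b = b * a)
    (α β x y : S) (hα : IsIdeal α) (hβ : IsIdeal β)
    (hx : e * x * e = α) (hy : e * y * e = β) :
    e * (x * y) * e = α * β :=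
  stmt17_general hss hΛ α β x y hx hy
end

section
/- Suppose the J-classes of S form a semilattice of left simple ve-semigroups (each J-class is a subsemigroup with a greatest ideal element, J_α·J_β ⊆ J_{αβ}, and each class has α as its only left ideal element). Then S is semisimple and satisfies condition Λ: any two left ideal elements of S commute. -/
open LeSemigroup

theorem stmt18 {S : Type*} [LeSemigroup S]
    (hsub : ∀ a b : S, t a = t b → t (a * b) = t a)
    (hmul : ∀ x y : S, t (x * y) = t x * t y)
    (hls : ∀ b : S, t b * b ≤ b → b = t b) :
    (∀ x : S, x ≤ e * x * e * x * e) ∧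
      ∀ a b : S, IsLeftIdeal a → IsLeftIdeal b → a * b = b * a := by
  have mono : ∀ {a b c d : S}, a ≤ b → c ≤ d → a * c ≤ b * d := by
    intro a b c d h1 h2
    exact le_trans (LeSemigroup.mul_le_mul_right' a b c h1)
      (LeSemigroup.mul_le_mul_left' c d b h2)
  have tle : ∀ x : S, x ≤ t x := fun x => le_sup_right
  -- every left ideal element c satisfies c = t c
  have L1 : ∀ c : S, e * c ≤ c → c = t c := by
    intro c hc
    refine hls c (le_trans ?_ hc)
    exact LeSemigroup.mul_le_mul_right' (t c) e c (LeSemigroup.le_e _)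
  -- every left ideal element is idempotent
  have Lidem : ∀ c : S, e * c ≤ c → c * c = c := by
    intro c hc
    have h1 : t (c * c) = t c := hsub c c rfl
    have h2 : t (c * c) = t c * t c := hmul c c
    have h3 : t c * t c = t c := h2.symm.trans h1
    have h4 := L1 c hc
    calc c * c = t c * t c := by rw [← h4]
    _ = t c := h3
    _ = c := h4.symm
  have te : (t (e : S)) = e := le_antisymm (LeSemigroup.le_e _) (tle e)
  constructor
  · intro x
    have hex : e * x = t (e * x) := by
      refine L1 (e * x) ?_
      calc e * (e * x) = (e * e) * x := (mul_assoc _ _ _).symm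
      _ ≤ e * x := LeSemigroup.mul_le_mul_right' (e * e) e x (LeSemigroup.le_e _)
    have hex2 : e * x = e * t x := by
      rw [hex, hmul e x, te]
    have hidem : t x * t x = t x := (hmul x x).symm.trans (hsub x x rfl)
    have h3 : t x ≤ e * x := by
      calc t x = t x * t x := hidem.symm
      _ ≤ e * t x := LeSemigroup.mul_le_mul_right' (t x) e (t x) (LeSemigroup.le_e _)
      _ = e * x := hex2.symm
    have h4 : t x ≤ (e * x) * (e * x) := by
      rw [← hidem]; exact mono h3 h3
    have h5 : t x ≤ ((e * x) * (e * x)) * e := by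
      rw [← hidem]; exact mono h4 (LeSemigroup.le_e _)
    calc x ≤ t x := tle x
    _ ≤ ((e * x) * (e * x)) * e := h5
    _ = e * x * e * x * e := by rw [mul_assoc e x (e * x), ← mul_assoc x e x,
        ← mul_assoc e (x * e) x, ← mul_assoc e x e]
  · intro a b ha hb
    have hab : e * (a * b) ≤ a * b := by
      calc e * (a * b) = (e * a) * b := (mul_assoc _ _ _).symm
      _ ≤ a * b := LeSemigroup.mul_le_mul_right' (e * a) a b ha
    have hba : e * (b * a) ≤ b * a := by
      calc e * (b * a) = (e * b) * a := (mul_assoc _ _ _).symm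
      _ ≤ b * a := LeSemigroup.mul_le_mul_right' (e * b) b a hb
    -- from c = t c, two-sided ideal property
    have ideal : ∀ c : S, e * c ≤ c → e * c * e ≤ c := by
      intro c hc
      have h := L1 c hc
      calc e * c * e ≤ t c := le_trans le_sup_left (le_trans le_sup_left le_sup_left)
      _ = c := h.symm
    have key : ∀ u v : S, e * (u * v) ≤ u * v → e * (v * u) ≤ v * u → u * v ≤ v * u := by
      intro u v huv hvu
      calc u * v = (u * v) * (u * v) := (Lidem _ huv).symm
      _ = (u * (v * u)) * v := by simp only [mul_assoc]
      _ ≤ (e * (v * u)) * e := mono (mono (LeSemigroup.le_e u) le_rfl) (LeSemigroup.le_e v)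
      _ ≤ v * u := ideal _ hvu
    exact le_antisymm (key a b hab hba) (key b a hba hab)
end

section
/- A semisimple le-semigroup S satisfying condition Λ is intra-regular: for every x ∈ S, x ≤ εx²ε. -/
open LeSemigroup

theorem stmt19 {S : Type*} [LeSemigroup S]
    (hss : ∀ x : S, x ≤ e * x * e * x * e)
    (hΛ : ∀ a b : S, IsLeftIdeal a → IsLeftIdeal b → a * b = b * a)
    (x : S) : x ≤ e * (x * x) * e := by
  have hee : (e : S) * e ≤ e := LeSemigroup.le_e _
  have h1 : IsLeftIdeal (e : S) := hee
  have h2 : IsLeftIdeal (e * x : S) := by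
    show e * (e * x) ≤ e * x
    rw [← mul_assoc]
    exact LeSemigroup.mul_le_mul_right' _ _ _ hee
  have hc : e * (e * x) = (e * x) * e := hΛ e (e * x) h1 h2
  calc x ≤ e * x * e * x * e := hss x
    _ = ((e * e) * x) * x * e := by rw [← hc, ← mul_assoc]
    _ ≤ (e * x) * x * e := by
        apply LeSemigroup.mul_le_mul_right' _ _ _
        apply LeSemigroup.mul_le_mul_right' _ _ _
        exact LeSemigroup.mul_le_mul_right' _ _ _ hee
    _ = e * (x * x) * e := by rw [mul_assoc e x x]
end
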